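/- Assume in addition that E is locally convex and that S and T are compact and metrizable, and let γ : S → T be the map γ(s) = ℓ_T(s)⁻¹ • s. Then for every subset K ⊆ S one has γ(M_K(S)) ⊆ M_{γ(K)}(T). -/

import Mathlib

open MeasureTheory
open NNReal ENNReal

/-- `t ∈ E` is the barycenter of the measure `μ` on `E` if `φ t = ∫ φ dμ` for every
continuous real-linear functional `φ : E → ℝ`. -/
def IsBarycenter {E : Type*} [AddCommGroup E] [Module ℝ E] [TopologicalSpace E]
    [MeasurableSpace E] (μ : Measure E) (t : E) : Prop :=
  ∀ φ : E →L[ℝ] ℝ, φ t = ∫ x, φ x ∂μ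

/-- For a compact convex set `X ⊆ E` and `K ⊆ X`, `MSet X K` is the set of points `x ∈ X`
that are the barycenter of some Borel probability measure `μ` on `X` (i.e. `μ Xᶜ = 0`)
with `μ (X \ K) = 0`. -/
def MSet {E : Type*} [AddCommGroup E] [Module ℝ E] [TopologicalSpace E]
    [MeasurableSpace E] (X K : Set E) : Set E :=
  {x | x ∈ X ∧ ∃ μ : Measure E, IsProbabilityMeasure μ ∧ μ Xᶜ = 0 ∧
    IsBarycenter μ x ∧ μ (X \ K) = 0}

/-- From the proof of part (2) of Proposition 2.7 of the paper: when the two bases `S`, `T`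
of the cone `C` are compact and metrizable, the base-change map `γ s = (ℓ_T s)⁻¹ • s`
satisfies `γ(M_K(S)) ⊆ M_{γ(K)}(T)` for every `K ⊆ S`. -/
theorem stmt9 {E : Type*} [AddCommGroup E] [Module ℝ E] [TopologicalSpace E] [T2Space E]
    [IsTopologicalAddGroup E] [ContinuousSMul ℝ E] [LocallyConvexSpace ℝ E]
    [MeasurableSpace E] [BorelSpace E]
    (C : Set E) (hCadd : ∀ x ∈ C, ∀ y ∈ C, x + y ∈ C)
    (hCsmul : ∀ r : ℝ, 0 ≤ r → ∀ x ∈ C, r • x ∈ C)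
    (ℓS ℓT : E →L[ℝ] ℝ)
    (hℓS : ∀ x ∈ C, x ≠ 0 → 0 < ℓS x) (hℓT : ∀ x ∈ C, x ≠ 0 → 0 < ℓT x)
    (hScomp : IsCompact {x ∈ C | ℓS x = 1}) (hTcomp : IsCompact {x ∈ C | ℓT x = 1})
    (hSmetr : TopologicalSpace.MetrizableSpace {x ∈ C | ℓS x = 1})
    (hTmetr : TopologicalSpace.MetrizableSpace {x ∈ C | ℓT x = 1})
    (K : Set E) (hK : K ⊆ {x ∈ C | ℓS x = 1}) :
    (fun x => (ℓT x)⁻¹ • x) '' MSet {x ∈ C | ℓS x = 1} K ⊆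
      MSet {x ∈ C | ℓT x = 1} ((fun x => (ℓT x)⁻¹ • x) '' K) := by
  set S : Set E := {x ∈ C | ℓS x = 1} with hSdef
  set T : Set E := {x ∈ C | ℓT x = 1} with hTdef
  set g : E → E := fun x => (ℓT x)⁻¹ • x with hgdef
  -- basic facts
  have hg_meas : Measurable g := (ℓT.continuous.measurable.inv).smul measurable_id
  have hSpos : ∀ s ∈ S, 0 < ℓT s := by
    intro s hs
    refine hℓT s hs.1 ?_
    rintro rfl
    have h1 : ℓS (0:E) = 1 := hs.2
    rw [_root_.map_zero] at h1
    exact zero_ne_one h1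
  have hST : ∀ s ∈ S, g s ∈ T := by
    intro s hs
    have hpos := hSpos s hs
    refine ⟨hCsmul _ (inv_nonneg.2 hpos.le) s hs.1, ?_⟩
    simp only [hgdef, _root_.map_smul, smul_eq_mul]
    field_simp
  rintro y ⟨x, ⟨hxS, μ, hμprob, hμSc, hbary, hμSK⟩, rfl⟩
  have ha : 0 < ℓT x := hSpos x hxS
  set a : ℝ := ℓT x with hadef
  -- the density
  set w : E → ℝ≥0 := fun s => Real.toNNReal (a⁻¹ * ℓT s) with hwdef
  have hw_meas : Measurable w :=
    (measurable_const.mul ℓT.continuous.measurable).real_toNNReal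
  set ρ : Measure E := μ.withDensity (fun s => (w s : ℝ≥0∞)) with hρdef
  have hρac : ρ ≪ μ := withDensity_absolutelyContinuous μ _
  have hae_S : ∀ᵐ s ∂μ, s ∈ S := mem_ae_iff.2 hμSc
  -- integrability of ℓT wrt μ
  have hℓT_int : Integrable (fun s => ℓT s) μ := by
    obtain ⟨M, hM⟩ : ∃ M : ℝ, ∀ s ∈ S, ‖ℓT s‖ ≤ M := by
      obtain ⟨M, hM⟩ := (hScomp.image ℓT.continuous).isBounded.subset_closedBall 0
      exact ⟨M, fun s hs => by simpa [Metric.mem_closedBall] using hM ⟨s, hs, rfl⟩⟩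
    exact ⟨ℓT.continuous.aestronglyMeasurable,
      HasFiniteIntegral.of_bounded (hae_S.mono fun s hs => hM s hs)⟩
  have hint_a : ∫ s, ℓT s ∂μ = a := (hbary ℓT).symm
  -- ρ is a probability measure
  have hρuniv : ρ Set.univ = 1 := by
    rw [hρdef, withDensity_apply _ MeasurableSet.univ, setLIntegral_univ]
    have h1 : (fun s => ((w s : ℝ≥0) : ℝ≥0∞)) = fun s => ENNReal.ofReal (a⁻¹ * ℓT s) := by
      funext s; simp [hwdef, ENNReal.ofReal]
    rw [h1, ← ofReal_integral_eq_lintegral_ofReal (hℓT_int.const_mul _)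
      (hae_S.mono fun s hs => mul_nonneg (inv_nonneg.2 ha.le) (by
        rcases eq_or_ne s 0 with rfl | h; · simp
        exact (hℓT s hs.1 h).le))]
    rw [integral_const_mul, hint_a, inv_mul_cancel₀ ha.ne']
    simp
  have hρprob : IsProbabilityMeasure ρ := ⟨hρuniv⟩
  have hρSc : ρ Sᶜ = 0 := hρac hμSc
  -- the pushforward measure
  set ν : Measure E := ρ.map g with hνdef
  have hTmeas : MeasurableSet T := hTcomp.isClosed.measurableSet
  have hνprob : IsProbabilityMeasure ν := by
    constructor
    rw [hνdef, Measure.map_apply hg_meas MeasurableSet.univ]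
    simpa using hρuniv
  have hνTc : ν Tᶜ = 0 := by
    rw [hνdef, Measure.map_apply hg_meas hTmeas.compl]
    refine measure_mono_null ?_ hρSc
    intro s hs
    simp only [Set.mem_compl_iff] at hs ⊢
    exact fun hsS => hs (hST s hsS)
  -- barycenter
  have hbary' : IsBarycenter ν (g x) := by
    intro φ
    rw [hνdef, integral_map hg_meas.aemeasurable φ.continuous.aestronglyMeasurable,
      hρdef, integral_withDensity_eq_integral_smul hw_meas]
    have hcongr : ∀ᵐ s ∂μ, w s • φ (g s) = a⁻¹ * φ s := by
      refine hae_S.mono fun s hs => ?_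
      have hpos := hSpos s hs
      simp only [hwdef, hgdef, _root_.map_smul, smul_eq_mul, NNReal.smul_def,
        Real.coe_toNNReal _ (mul_nonneg (inv_nonneg.2 ha.le) hpos.le)]
      field_simp
    rw [integral_congr_ae hcongr, integral_const_mul, ← hbary φ]
    simp [hgdef, _root_.map_smul, smul_eq_mul]
    exact Or.inl hadef.symm
  -- null set outside γ(K)
  have hνTK : ν (T \ g '' K) = 0 := by
    have hKc0 : μ Kᶜ = 0 := by
      have : Kᶜ ⊆ (S \ K) ∪ Sᶜ := by
        intro s hs
        by_cases h : s ∈ S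
        · exact Or.inl ⟨h, hs⟩
        · exact Or.inr h
      exact measure_mono_null this (measure_union_null hμSK hμSc)
    obtain ⟨B, hKB, hBmeas, hB0⟩ := exists_measurable_superset_of_null hKc0
    have hBcK : Bᶜ ⊆ K := fun s hs => by
      by_contra h; exact hs (hKB h)
    -- the homeomorphic copy of `Bᶜ ∩ S` inside T is measurable
    haveI : CompactSpace S := isCompact_iff_compactSpace.mp hScomp
    set h : S → E := fun s => g (s : E) with hhdef
    have hh_cont : Continuous h := by
      refine Continuous.smul (Continuous.inv₀ (ℓT.continuous.comp continuous_subtype_val) ?_)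
        continuous_subtype_val
      exact fun s => (hSpos s s.2).ne'
    have hh_inj : Function.Injective h := by
      intro s₁ s₂ heq
      have h1 := hSpos s₁ s₁.2
      have h2 := hSpos s₂ s₂.2
      have hℓ : (ℓT (s₁ : E))⁻¹ = (ℓT (s₂ : E))⁻¹ := by
        have := congrArg ℓS heq
        simpa [hhdef, hgdef, _root_.map_smul, smul_eq_mul, s₁.2.2, s₂.2.2] using this
      have heq' : (ℓT (s₁ : E))⁻¹ • (s₁ : E) = (ℓT (s₁ : E))⁻¹ • (s₂ : E) := by
        have h3 := heq
        simp only [hhdef, hgdef] at h3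
        rw [h3, hℓ]
      have hval : (s₁ : E) = (s₂ : E) := by
        have := congrArg (fun z => (ℓT (s₁ : E)) • z) heq'
        simpa [smul_smul, mul_inv_cancel₀ h1.ne'] using this
      exact Subtype.ext hval
    have hemb : MeasurableEmbedding h :=
      (hh_cont.isClosedEmbedding hh_inj).measurableEmbedding
    set W : Set E := h '' (Subtype.val ⁻¹' Bᶜ) with hWdef
    have hWmeas : MeasurableSet W :=
      hemb.measurableSet_image.2 (hBmeas.compl.preimage measurable_subtype_coe)
    have hWK : W ⊆ g '' K := by
      rintro _ ⟨s, hsB, rfl⟩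
      exact ⟨(s : E), hBcK hsB, rfl⟩
    have hsub : T \ g '' K ⊆ T \ W := Set.diff_subset_diff_right hWK
    refine measure_mono_null hsub ?_
    rw [hνdef, Measure.map_apply hg_meas (hTmeas.diff hWmeas)]
    refine measure_mono_null ?_ (hρac (measure_union_null hB0 hμSc))
    intro s hs
    simp only [Set.mem_preimage, Set.mem_diff] at hs
    by_contra hcon
    simp only [Set.mem_union, Set.mem_compl_iff, not_or, not_not] at hcon
    exact hs.2 ⟨⟨s, hcon.2⟩, hcon.1, rfl⟩
  exact ⟨hST x hxS, ν, hνprob, hνTc, hbary', hνTK⟩
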